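/- For any x ∈ ℝ^d and any positive integer K, let x_K denote the vector obtained from x by keeping its K largest-magnitude entries and setting the rest to zero. Then ‖x − x_K‖₂ ≤ ‖x‖₁/(2√K). -/
import Mathlib


open scoped BigOperators

/-- Squared-sum Euclidean norm of a finite vector. -/
noncomputable def l2norm {ι : Type*} [Fintype ι] (v : ι → ℝ) : ℝ :=
  Real.sqrt (∑ i, v i ^ 2)

/-- The ℓ₁ norm of a finite vector. -/
noncomputable def l1norm {ι : Type*} [Fintype ι] (v : ι → ℝ) : ℝ :=
  ∑ i, |v i|

/-- `Φ_I q`: the product of the column submatrix `Φ_I` with a coefficient vector `q`. -/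
noncomputable def colMul {m N : ℕ} (Φ : Matrix (Fin m) (Fin N) ℝ) (I : Finset (Fin N))
    (q : I → ℝ) : Fin m → ℝ :=
  fun r => ∑ i : I, Φ r i.1 * q i

/-- `Φ_I^* y`: the transpose of the column submatrix applied to `y`. -/
noncomputable def colTMul {m N : ℕ} (Φ : Matrix (Fin m) (Fin N) ℝ) (I : Finset (Fin N))
    (y : Fin m → ℝ) : I → ℝ :=
  fun i => ∑ r, Φ r i.1 * y r

/-- The Gram matrix `Φ_I^* Φ_I`. -/
noncomputable def gram {m N : ℕ} (Φ : Matrix (Fin m) (Fin N) ℝ) (I : Finset (Fin N)) :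
    Matrix I I ℝ :=
  fun i j => ∑ r, Φ r i.1 * Φ r j.1

/-- `Φ` satisfies the restricted isometry property at sparsity `K` with parameter `δ`. -/
def IsRIP {m N : ℕ} (Φ : Matrix (Fin m) (Fin N) ℝ) (K : ℕ) (δ : ℝ) : Prop :=
  ∀ I : Finset (Fin N), I.card ≤ K → ∀ q : I → ℝ,
    (1 - δ) * ∑ i, q i ^ 2 ≤ ∑ r, (colMul Φ I q r) ^ 2 ∧
      ∑ r, (colMul Φ I q r) ^ 2 ≤ (1 + δ) * ∑ i, q i ^ 2

/-- The RIP constant `δ_K`: the infimum of all admissible RIP parameters. -/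
noncomputable def ripConst {m N : ℕ} (Φ : Matrix (Fin m) (Fin N) ℝ) (K : ℕ) : ℝ :=
  sInf {δ : ℝ | 0 ≤ δ ∧ IsRIP Φ K δ}

/-- Projection coefficients `(Φ_I^* Φ_I)⁻¹ Φ_I^* y`. -/
noncomputable def projCoeff {m N : ℕ} (Φ : Matrix (Fin m) (Fin N) ℝ) (I : Finset (Fin N))
    (y : Fin m → ℝ) : I → ℝ :=
  (gram Φ I)⁻¹.mulVec (colTMul Φ I y)

/-- Orthogonal projection of `y` onto the column span of `Φ_I`. -/
noncomputable def projVec {m N : ℕ} (Φ : Matrix (Fin m) (Fin N) ℝ) (I : Finset (Fin N))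
    (y : Fin m → ℝ) : Fin m → ℝ :=
  colMul Φ I (projCoeff Φ I y)

theorem best_K_term_approximation {d K : ℕ} (hK : 0 < K) (x : Fin d → ℝ)
    (S : Finset (Fin d)) (hS : S.card = K)
    (hsel : ∀ i ∈ S, ∀ j ∉ S, |x j| ≤ |x i|) :
    l2norm (fun i => if i ∈ S then 0 else x i) ≤ l1norm x / (2 * Real.sqrt K) := by

  classical
  have hne : S.Nonempty := Finset.card_pos.mp (hS ▸ hK)
  set t : ℝ := S.inf' hne (fun i => |x i|) with ht
  set a : ℝ := ∑ i ∈ S, |x i| with ha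
  set b : ℝ := ∑ i ∈ Sᶜ, |x i| with hb
  have ha0 : 0 ≤ a := Finset.sum_nonneg fun i _ => abs_nonneg _
  have hb0 : 0 ≤ b := Finset.sum_nonneg fun i _ => abs_nonneg _
  have ht0 : 0 ≤ t := by
    obtain ⟨i, hi, hie⟩ := S.exists_mem_eq_inf' hne (fun i => |x i|)
    rw [ht, hie]; exact abs_nonneg _
  have hl1 : l1norm x = a + b := by
    rw [l1norm, ha, hb, ← Finset.sum_add_sum_compl S]
  -- each tail entry ≤ t
  have htail : ∀ j ∈ Sᶜ, |x j| ≤ t := by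
    intro j hj
    obtain ⟨i, hi, hie⟩ := S.exists_mem_eq_inf' hne (fun i => |x i|)
    rw [ht, hie]
    exact hsel i hi j (Finset.mem_compl.mp hj)
  -- K * t ≤ a
  have hKt : (K : ℝ) * t ≤ a := by
    calc (K : ℝ) * t = ∑ _i ∈ S, t := by rw [Finset.sum_const, hS, nsmul_eq_mul]
      _ ≤ ∑ i ∈ S, |x i| := Finset.sum_le_sum fun i hi => S.inf'_le (fun i => |x i|) hi
  have hKpos : (0 : ℝ) < K := by exact_mod_cast hK
  -- sum of squares of tail ≤ t * b
  have hsq : (∑ i, (if i ∈ S then 0 else x i) ^ 2) ≤ t * b := by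
    have : (∑ i, (if i ∈ S then (0:ℝ) else x i) ^ 2) = ∑ i ∈ Sᶜ, x i ^ 2 := by
      rw [← Finset.sum_add_sum_compl S]
      have h1 : ∑ i ∈ S, (if i ∈ S then (0:ℝ) else x i) ^ 2 = 0 := by
        apply Finset.sum_eq_zero; intro i hi; simp [hi]
      have h2 : ∑ i ∈ Sᶜ, (if i ∈ S then (0:ℝ) else x i) ^ 2 = ∑ i ∈ Sᶜ, x i ^ 2 := by
        apply Finset.sum_congr rfl; intro i hi
        simp [Finset.mem_compl.mp hi]
      rw [h1, h2, zero_add]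
    rw [this, hb, Finset.mul_sum]
    apply Finset.sum_le_sum
    intro i hi
    have := htail i hi
    calc x i ^ 2 = |x i| * |x i| := by rw [← sq_abs, sq]
      _ ≤ t * |x i| := mul_le_mul_of_nonneg_right this (abs_nonneg _)
  -- combine with AM-GM
  have hmain : (∑ i, (if i ∈ S then 0 else x i) ^ 2) ≤ (a + b) ^ 2 / (4 * K) := by
    have h1 : t * b ≤ a * b / K := by
      have : t ≤ a / K := by
        rw [le_div_iff₀ hKpos]; linarith [hKt]
      calc t * b ≤ (a / K) * b := mul_le_mul_of_nonneg_right this hb0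
        _ = a * b / K := by ring
    have h2 : a * b / K ≤ (a + b) ^ 2 / (4 * K) := by
      rw [div_le_div_iff₀ hKpos (by positivity)]
      nlinarith [sq_nonneg (a - b), hKpos.le]
    linarith
  rw [l2norm, hl1]
  have hR0 : 0 ≤ (a + b) / (2 * Real.sqrt K) := by positivity
  have hR : ((a + b) / (2 * Real.sqrt K)) ^ 2 = (a + b) ^ 2 / (4 * K) := by
    rw [div_pow, mul_pow, Real.sq_sqrt hKpos.le]
    norm_num
  calc Real.sqrt (∑ i, (if i ∈ S then 0 else x i) ^ 2)
      ≤ Real.sqrt (((a + b) / (2 * Real.sqrt K)) ^ 2) := by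
        apply Real.sqrt_le_sqrt; rw [hR]; exact hmain
    _ = (a + b) / (2 * Real.sqrt K) := Real.sqrt_sq hR0
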